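/- arXiv:1309.1275 — 3 statements merged into one kernel-verified Lean document; each statement's English description precedes it below -/
import Mathlib

section
/- Let E and F be vector spaces over a field K, and let u : E^n → F be a symmetric n-linear map. Then for all x₀, x₁, ..., xₙ in E, n! · u(x₁,...,xₙ) = Σ_{ε₁,...,εₙ ∈ {0,1}} (-1)^{n-(ε₁+⋯+εₙ)} ũ(x₀ + ε₁x₁ + ⋯ + εₙxₙ), where ũ(x) = u(x,...,x). (Bochnak–Siciak polarization identity with arbitrary base point.) -/
/-- Bochnak–Siciak polarization identity with an arbitrary base point `x₀`,
over an arbitrary field: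
`n! • u(x₁,…,xₙ) = ∑_{ε∈{0,1}ⁿ} (-1)^{n-(ε₁+⋯+εₙ)} ũ(x₀ + ε₁x₁ + ⋯ + εₙxₙ)`. -/
theorem bochnak_siciak_polarization
    {K E F : Type*} [Field K]
    [AddCommGroup E] [Module K E] [AddCommGroup F] [Module K F]
    {n : ℕ} (u : MultilinearMap K (fun _ : Fin n => E) F)
    (hsym : ∀ (σ : Equiv.Perm (Fin n)) (v : Fin n → E), u (v ∘ σ) = u v)
    (x₀ : E) (x : Fin n → E) :
    n.factorial • u x =
      ∑ ε : Fin n → Bool,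
        (-1 : ℤ) ^ (n - ∑ i, (if ε i then 1 else 0 : ℕ)) •
          u (fun _ => x₀ + ∑ i, (if ε i then x i else 0)) := by
  classical
  -- the vector of "choices" in each slot
  set c : (Fin n → Bool) → Fin (n + 1) → E :=
    fun ε => Fin.cons x₀ (fun i => if ε i then x i else 0) with hc
  set d : Fin (n + 1) → E := Fin.cons x₀ x with hd
  -- coefficient function
  set a : (Fin n → Fin (n + 1)) → Fin n → Bool → ℤ :=
    fun f i b => if b then 1 else (if ∃ j, f j = i.succ then 0 else -1) with ha
  -- rewrite the sign as a product
  have signLemma : ∀ ε : Fin n → Bool,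
      ((-1 : ℤ) ^ (n - ∑ i, (if ε i then 1 else 0 : ℕ))) =
      ∏ i, (if ε i then (1 : ℤ) else -1) := by
    intro ε
    have h1 : ∀ i : Fin n, (if ε i then (1 : ℤ) else -1) =
        (-1 : ℤ) ^ (if ε i then 0 else 1 : ℕ) := by
      intro i; cases ε i <;> simp
    have hsum : (∑ i, (if ε i then 1 else 0 : ℕ)) + (∑ i, (if ε i then 0 else 1 : ℕ)) = n := by
      rw [← Finset.sum_add_distrib]
      have : ∀ i : Fin n, ((if ε i then 1 else 0 : ℕ) + (if ε i then 0 else 1 : ℕ)) = 1 := by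
        intro i; cases ε i <;> simp
      simp [this]
    have hsub : n - (∑ i, (if ε i then 1 else 0 : ℕ)) = ∑ i, (if ε i then 0 else 1 : ℕ) := by
      omega
    rw [hsub]
    simp only [h1]
    rw [Finset.prod_pow_eq_pow_sum]
  -- expand each evaluation multilinearly
  have step1 : ∀ ε : Fin n → Bool,
      u (fun _ => x₀ + ∑ i, (if ε i then x i else 0)) =
      ∑ f : Fin n → Fin (n + 1), u (fun j => c ε (f j)) := by
    intro ε
    have harg : (fun _ : Fin n => x₀ + ∑ i, (if ε i then x i else 0)) =
        (fun _ : Fin n => ∑ k : Fin (n + 1), c ε k) := by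
      funext j
      rw [Fin.sum_univ_succ]
      simp [hc]
    rw [harg]
    exact u.map_sum (g := fun _ k => c ε k)
  -- key pointwise identity
  have claim1 : ∀ (f : Fin n → Fin (n + 1)) (ε : Fin n → Bool),
      (∏ i, (if ε i then (1 : ℤ) else -1)) • u (fun j => c ε (f j)) =
      (∏ i, a f i (ε i)) • u (fun j => d (f j)) := by
    intro f ε
    by_cases h : ∀ i : Fin n, (∃ j, f j = i.succ) → ε i = true
    · have hprod : (∏ i, (if ε i then (1 : ℤ) else -1)) = ∏ i, a f i (ε i) := by
        refine Finset.prod_congr rfl fun i _ => ?_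
        rcases hb : ε i with _ | _
        · have : ¬ ∃ j, f j = i.succ := fun hex => by simp [h i hex] at hb
          simp [ha, hb, this]
        · simp [ha, hb]
      have hvec : (fun j => c ε (f j)) = (fun j => d (f j)) := by
        funext j
        rcases Fin.eq_zero_or_eq_succ (f j) with h0 | ⟨i, hi⟩
        · rw [h0]; simp [hc, hd]
        · rw [hi]; simp [hc, hd, h i ⟨j, hi⟩]
      rw [hprod, hvec]
    · push_neg at h
      obtain ⟨i, hex, hne⟩ := h
      have hεi : ε i = false := by
        cases hb : ε i
        · rfl
        · exact absurd hb hne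
      obtain ⟨j, hj⟩ := hex
      have hzero : u (fun j => c ε (f j)) = 0 := by
        apply u.map_coord_zero (i := j)
        rw [hj]; simp [hc, hεi]
      have hzero2 : (∏ k, a f k (ε k)) = 0 := by
        apply Finset.prod_eq_zero (Finset.mem_univ i)
        simp [ha, hεi]
        exact ⟨j, hj⟩
      rw [hzero, hzero2, smul_zero, zero_smul]
  -- now compute the RHS
  have rhs_eq : (∑ ε : Fin n → Bool,
        (-1 : ℤ) ^ (n - ∑ i, (if ε i then 1 else 0 : ℕ)) •
          u (fun _ => x₀ + ∑ i, (if ε i then x i else 0))) =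
      ∑ f : Fin n → Fin (n + 1),
        (if ∀ i : Fin n, ∃ j, f j = i.succ then u (fun j => d (f j)) else 0) := by
    calc
      (∑ ε : Fin n → Bool,
          (-1 : ℤ) ^ (n - ∑ i, (if ε i then 1 else 0 : ℕ)) •
            u (fun _ => x₀ + ∑ i, (if ε i then x i else 0)))
        = ∑ ε : Fin n → Bool, ∑ f : Fin n → Fin (n + 1),
            (∏ i, a f i (ε i)) • u (fun j => d (f j)) := by
          refine Finset.sum_congr rfl fun ε _ => ?_
          rw [signLemma, step1, Finset.smul_sum]
          exact Finset.sum_congr rfl fun f _ => claim1 f ε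
      _ = ∑ f : Fin n → Fin (n + 1), ∑ ε : Fin n → Bool,
            (∏ i, a f i (ε i)) • u (fun j => d (f j)) := Finset.sum_comm
      _ = ∑ f : Fin n → Fin (n + 1),
            (∑ ε : Fin n → Bool, ∏ i, a f i (ε i)) • u (fun j => d (f j)) := by
          refine Finset.sum_congr rfl fun f _ => ?_
          rw [Finset.sum_smul]
      _ = ∑ f : Fin n → Fin (n + 1),
            (if ∀ i : Fin n, ∃ j, f j = i.succ then u (fun j => d (f j)) else 0) := by
          refine Finset.sum_congr rfl fun f _ => ?_
          have hfact : (∑ ε : Fin n → Bool, ∏ i, a f i (ε i)) =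
              ∏ i, ∑ b : Bool, a f i b := (Fintype.prod_sum (fun i b => a f i b)).symm
          have hbool : ∀ i : Fin n, (∑ b : Bool, a f i b) =
              (if ∃ j, f j = i.succ then (1 : ℤ) else 0) := by
            intro i
            rw [Fintype.sum_bool]
            by_cases hex : ∃ j, f j = i.succ <;> simp [ha, hex]
          rw [hfact]
          simp only [hbool]
          rw [Fintype.prod_boole]
          by_cases hcond : ∀ i : Fin n, ∃ j, f j = i.succ <;> simp [hcond]
  rw [rhs_eq]
  rw [Finset.sum_ite, Finset.sum_const_zero, add_zero]
  -- now the sum over "good" f equals the sum over permutations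
  have perm_eq : (∑ σ : Equiv.Perm (Fin n), u x) =
      ∑ f ∈ Finset.univ.filter (fun f : Fin n → Fin (n + 1) => ∀ i : Fin n, ∃ j, f j = i.succ),
        u (fun j => d (f j)) := by
    refine Finset.sum_bij (fun σ _ => Fin.succ ∘ σ) ?_ ?_ ?_ ?_
    · intro σ _
      simp only [Finset.mem_filter, Finset.mem_univ, true_and]
      intro i
      exact ⟨σ.symm i, by simp⟩
    · intro σ _ τ _ h
      ext j
      have := congrFun h j
      exact congrArg Fin.val (Fin.succ_injective n this)
    · intro f hf
      simp only [Finset.mem_filter, Finset.mem_univ, true_and] at hf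
      -- build the permutation
      have hinj : Function.Injective (fun i : Fin n => Classical.choose (hf i)) := by
        intro i i' hii
        have h1 : f (Classical.choose (hf i)) = i.succ := Classical.choose_spec (hf i)
        have h2 : f (Classical.choose (hf i')) = i'.succ := Classical.choose_spec (hf i')
        simp only at hii
        rw [hii, h2] at h1
        exact Fin.succ_injective n h1.symm
      have hbij : Function.Bijective (fun i : Fin n => Classical.choose (hf i)) :=
        (Finite.injective_iff_bijective).mp hinj
      set τ : Equiv.Perm (Fin n) := Equiv.ofBijective _ hbij with hτ
      refine ⟨τ.symm, Finset.mem_univ _, ?_⟩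
      funext j
      have hτj : Classical.choose (hf (τ.symm j)) = j := by
        have := τ.apply_symm_apply j
        simpa [hτ, Equiv.ofBijective] using this
      have := Classical.choose_spec (hf (τ.symm j))
      rw [hτj] at this
      simp [Function.comp, this]
    · intro σ _
      have : (fun j => d ((Fin.succ ∘ σ) j)) = x ∘ σ := by
        funext j; simp [hd, Function.comp]
      rw [this, hsym σ x]
  rw [← perm_eq, Finset.sum_const, Finset.card_univ, Fintype.card_perm, Fintype.card_fin]
end

section
/- In any commutative ring A and for any a₁,...,aₙ ∈ A: n! · a₁a₂⋯aₙ = Σ_{J ⊆ {1,...,n}} (-1)^{n-|J|} (Σ_{i∈J} aᵢ)^n. -/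
/-- Nelson's product formula in an arbitrary commutative ring:
`n! • a₁⋯aₙ = ∑_{J ⊆ {1,…,n}} (-1)^{n-|J|} (∑_{i∈J} aᵢ)^n`. -/
theorem product_polarization_comm_ring
    {A : Type*} [CommRing A] {n : ℕ} (a : Fin n → A) :
    n.factorial • ∏ i, a i =
      ∑ J : Finset (Fin n), (-1 : A) ^ (n - J.card) * (∑ i ∈ J, a i) ^ n := by
  classical
  have h1 : ∀ J : Finset (Fin n), (∑ i ∈ J, a i)
      = ∑ i : Fin n, if i ∈ J then a i else 0 := by
    intro J; rw [Finset.sum_ite_mem, Finset.univ_inter]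
  simp_rw [h1, Fintype.sum_pow]
  -- expand and swap sums
  simp_rw [Finset.mul_sum]
  rw [Finset.sum_comm]
  have h2 : ∀ (p : Fin n → Fin n) (J : Finset (Fin n)),
      (∏ i : Fin n, if p i ∈ J then a (p i) else 0)
        = if Finset.image p Finset.univ ⊆ J then ∏ i, a (p i) else 0 := by
    intro p J
    rw [Fintype.prod_ite_zero]
    congr 1
    simp [Finset.image_subset_iff]
  simp_rw [h2, mul_ite, mul_zero]
  have h3 : ∀ p : Fin n → Fin n,
      (∑ J : Finset (Fin n), if Finset.image p Finset.univ ⊆ J then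
          (-1 : A) ^ (n - J.card) * ∏ i, a (p i) else 0)
        = (if Finset.image p Finset.univ = Finset.univ then (1 : A) else 0)
            * ∏ i, a (p i) := by
    intro p
    set S := Finset.image p Finset.univ with hS
    rw [Finset.sum_ite, Finset.sum_const_zero, add_zero]
    have he : ∀ J ∈ Finset.univ.filter (fun J => S ⊆ J), Jᶜ ∈ Sᶜ.powerset := by
      intro J hJ
      simp only [Finset.mem_filter] at hJ
      simpa [Finset.mem_powerset] using Finset.compl_subset_compl.mpr hJ.2
    have hstep : ∑ J ∈ Finset.univ.filter (fun J => S ⊆ J),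
          (-1 : A) ^ (n - J.card) * ∏ i, a (p i)
        = ∑ K ∈ Sᶜ.powerset, (-1 : A) ^ K.card * ∏ i, a (p i) := by
      refine Finset.sum_nbij' (i := fun J => Jᶜ) (j := fun K => Kᶜ) he
        (fun K hK => ?_) (fun J _ => by simp) (fun K _ => by simp) (fun J hJ => ?_)
      · simp only [Finset.mem_powerset] at hK
        simp only [Finset.mem_filter, Finset.mem_univ, true_and]
        simpa using Finset.compl_subset_compl.mpr hK
      · congr 2
        rw [Finset.card_compl, Fintype.card_fin]
    rw [hstep, ← Finset.sum_mul]
    congr 1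
    have := Finset.sum_powerset_neg_one_pow_card (x := Sᶜ)
    have h4 : (∑ m ∈ Sᶜ.powerset, (-1 : A) ^ m.card)
        = ((∑ m ∈ Sᶜ.powerset, (-1 : ℤ) ^ m.card : ℤ) : A) := by
      push_cast; rfl
    rw [h4, this]
    by_cases h : S = Finset.univ
    · simp [h]
    · have : Sᶜ ≠ ∅ := by
        simpa [Finset.compl_eq_empty_iff] using h
      simp [this, h]
  simp_rw [h3, ite_mul, one_mul, zero_mul]
  have h5 : ∀ p : Fin n → Fin n,
      Finset.image p Finset.univ = Finset.univ ↔ Function.Bijective p := by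
    intro p
    rw [← Finset.coe_injective.eq_iff]
    simp only [Finset.coe_image, Finset.coe_univ, Set.image_univ]
    constructor
    · intro h
      exact Finite.injective_iff_bijective.mp
        (Finite.surjective_iff_bijective.mp (Set.range_eq_univ.mp h)).1
    · intro h; exact Set.range_eq_univ.mpr h.2
  rw [Finset.sum_ite, Finset.sum_const_zero, add_zero]
  have h6 : ∑ p ∈ Finset.univ.filter
        (fun p : Fin n → Fin n => Finset.image p Finset.univ = Finset.univ),
      (∏ i, a (p i)) = ∑ σ : Equiv.Perm (Fin n), ∏ i, a (σ i) := by
    refine Finset.sum_bij'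
      (i := fun p hp => Equiv.ofBijective p ((h5 p).mp (by simpa using hp)))
      (j := fun σ _ => ⇑σ) ?_ ?_ ?_ ?_ ?_
    · intro p hp; exact Finset.mem_univ _
    · intro σ _
      simp [Finset.mem_filter, (h5 σ).mpr σ.bijective]
    · intro p hp; rfl
    · intro σ _; ext x; simp [Equiv.ofBijective]
    · intro p hp; rfl
  rw [h6]
  have h7 : ∀ σ : Equiv.Perm (Fin n), (∏ i, a (σ i)) = ∏ i, a i := fun σ =>
    Equiv.prod_comp σ a
  simp_rw [h7]
  rw [Finset.sum_const, Finset.card_univ, Fintype.card_perm, Fintype.card_fin]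
end

section
/- Let E, F be vector spaces over a field K of characteristic ≠ 2, and u : E^n → F a symmetric n-linear map. Then 2^n n! · u(x₁,...,xₙ) = Σ_{ε₁,...,εₙ ∈ {0,1}} (-1)^{ε₁+⋯+εₙ} ũ((-1)^{ε₁}x₁ + ⋯ + (-1)^{εₙ}xₙ), where ũ(x) = u(x,...,x). -/
/-- Signed polarization identity in characteristic ≠ 2:
`2ⁿ n! • u(x₁,…,xₙ) = ∑_{ε∈{0,1}ⁿ} (-1)^{ε₁+⋯+εₙ} ũ((-1)^{ε₁}x₁ + ⋯ + (-1)^{εₙ}xₙ)`. -/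
theorem signed_polarization
    {K E F : Type*} [Field K] [AddCommGroup E] [Module K E]
    [AddCommGroup F] [Module K F] (h2 : (2 : K) ≠ 0)
    {n : ℕ} (u : MultilinearMap K (fun _ : Fin n => E) F)
    (hsym : ∀ (σ : Equiv.Perm (Fin n)) (v : Fin n → E), u (v ∘ σ) = u v)
    (x : Fin n → E) :
    (2 ^ n * n.factorial) • u x =
      ∑ ε : Fin n → Bool,
        (-1 : ℤ) ^ (∑ i, (if ε i then 1 else 0 : ℕ)) •
          u (fun _ => ∑ i, (if ε i then -x i else x i)) := by
  classical
  set c : Bool → K := fun b => if b then -1 else 1 with hc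
  have hc2 : ∀ b, c b * c b = 1 := by intro b; cases b <;> simp [hc]
  have hcnot : ∀ b, c (!b) = - c b := by intro b; cases b <;> simp [hc]
  have hpow : ∀ ε : Fin n → Bool,
      ((-1 : K)) ^ (∑ i, (if ε i then 1 else 0 : ℕ)) = ∏ i, c (ε i) := by
    intro ε
    rw [← Finset.prod_pow_eq_pow_sum]
    refine Finset.prod_congr rfl fun i _ => ?_
    cases h : ε i <;> simp [hc]
  -- Step 1: expand each summand by multilinearity
  have step1 : ∀ ε : Fin n → Bool,
      (-1 : ℤ) ^ (∑ i, (if ε i then 1 else 0 : ℕ)) •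
          u (fun _ => ∑ i, (if ε i then -x i else x i)) =
      ∑ r : Fin n → Fin n,
        ((∏ i, c (ε i)) * ∏ j, c (ε (r j))) • u (x ∘ r) := by
    intro ε
    have hv : (fun _ : Fin n => ∑ i, (if ε i then -x i else x i)) =
        (fun _ : Fin n => ∑ i, c (ε i) • x i) := by
      funext j
      refine Finset.sum_congr rfl fun i _ => ?_
      cases h : ε i <;> simp [hc]
    rw [hv]
    rw [u.map_sum (g := fun _ i => c (ε i) • x i)]
    rw [Finset.smul_sum]
    refine Finset.sum_congr rfl fun r _ => ?_
    have := u.map_smul_univ (fun j => c (ε (r j))) (fun j => x (r j))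
    rw [show (fun j => c (ε (r j)) • x (r j)) = (fun j => (fun j' => c (ε (r j'))) j • (fun j' => x (r j')) j) from rfl]
    rw [this]
    have hz : ((-1 : ℤ) ^ (∑ i, (if ε i then 1 else 0 : ℕ)) : ℤ) •
        ((∏ j, c (ε (r j))) • u (x ∘ r)) =
        (((-1 : K)) ^ (∑ i, (if ε i then 1 else 0 : ℕ))) •
        ((∏ j, c (ε (r j))) • u (x ∘ r)) := by
      rw [← Int.cast_smul_eq_zsmul K]
      push_cast
      ring_nf
    show _ = ((∏ i, c (ε i)) * ∏ j, c (ε (r j))) • u (x ∘ r)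
    rw [show (x ∘ r) = fun j => x (r j) from rfl] at hz ⊢
    rw [hz, hpow, smul_smul]
  rw [Finset.sum_congr rfl fun ε _ => step1 ε]
  rw [Finset.sum_comm]
  -- combine coefficients for each r
  have step2 : ∀ r : Fin n → Fin n,
      ∑ ε : Fin n → Bool, ((∏ i, c (ε i)) * ∏ j, c (ε (r j))) • u (x ∘ r) =
      (∑ ε : Fin n → Bool, (∏ i, c (ε i)) * ∏ j, c (ε (r j))) • u (x ∘ r) := by
    intro r; rw [Finset.sum_smul]
  rw [Finset.sum_congr rfl fun r _ => step2 r]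
  -- coefficient computation
  have hS0 : ∀ r : Fin n → Fin n, ¬ Function.Surjective r →
      (∑ ε : Fin n → Bool, (∏ i, c (ε i)) * ∏ j, c (ε (r j))) = 0 := by
    intro r hr
    rw [Function.Surjective] at hr
    push_neg at hr
    obtain ⟨i₀, hi₀⟩ := hr
    refine Finset.sum_ninvolution (fun ε => Function.update ε i₀ (!ε i₀)) ?_ ?_
      (fun _ => Finset.mem_univ _) ?_
    · intro ε
      have h1 : (∏ i, c (Function.update ε i₀ (!ε i₀) i)) = - ∏ i, c (ε i) := by
        have hfe : (fun i => c (Function.update ε i₀ (!ε i₀) i)) =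
            Function.update (fun i => c (ε i)) i₀ (c (!ε i₀)) := by
          funext i
          exact Function.apply_update (fun _ b => c b) ε i₀ (!ε i₀) i
        rw [hfe, Finset.prod_update_of_mem (Finset.mem_univ i₀), hcnot,
          ← Finset.mul_prod_erase Finset.univ (fun i => c (ε i)) (Finset.mem_univ i₀)]
        rw [Finset.sdiff_singleton_eq_erase]
        ring
      have h2 : (∏ j, c (Function.update ε i₀ (!ε i₀) (r j))) = ∏ j, c (ε (r j)) := by
        refine Finset.prod_congr rfl fun j _ => ?_
        rw [Function.update_of_ne (hi₀ j)]
      rw [h1, h2]; ring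
    · intro ε _ h
      have := congrFun h i₀
      simp at this
    · intro ε
      simp [Function.update_idem]
  have hS1 : ∀ r : Fin n → Fin n, Function.Surjective r →
      (∑ ε : Fin n → Bool, (∏ i, c (ε i)) * ∏ j, c (ε (r j))) = (2 ^ n : K) := by
    intro r hr
    have hb : Function.Bijective r := hr.bijective_of_finite
    have he : ∀ ε : Fin n → Bool, (∏ i, c (ε i)) * ∏ j, c (ε (r j)) = 1 := by
      intro ε
      have : (∏ j, c (ε (r j))) = ∏ i, c (ε i) :=
        Equiv.prod_comp (Equiv.ofBijective r hb) (fun i => c (ε i))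
      rw [this, ← Finset.prod_mul_distrib]
      simp [hc2]
    rw [Finset.sum_congr rfl fun ε _ => he ε]
    simp [Finset.card_univ]
  -- split sum over surjective / non-surjective maps
  rw [← Finset.sum_filter_add_sum_filter_not Finset.univ
    (fun r : Fin n → Fin n => Function.Surjective r)]
  have hzero : ∑ r ∈ Finset.univ.filter
      (fun r : Fin n → Fin n => ¬ Function.Surjective r),
      (∑ ε : Fin n → Bool, (∏ i, c (ε i)) * ∏ j, c (ε (r j))) • u (x ∘ r) = 0 := by
    refine Finset.sum_eq_zero fun r hrmem => ?_
    rw [Finset.mem_filter] at hrmem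
    rw [hS0 r hrmem.2, zero_smul]
  rw [hzero, add_zero]
  have hone : ∑ r ∈ Finset.univ.filter
      (fun r : Fin n → Fin n => Function.Surjective r),
      (∑ ε : Fin n → Bool, (∏ i, c (ε i)) * ∏ j, c (ε (r j))) • u (x ∘ r) =
      ∑ _r ∈ Finset.univ.filter (fun r : Fin n → Fin n => Function.Surjective r),
        (2 ^ n : K) • u x := by
    refine Finset.sum_congr rfl fun r hrmem => ?_
    rw [Finset.mem_filter] at hrmem
    have hb : Function.Bijective r := hrmem.2.bijective_of_finite
    have : u (x ∘ r) = u x := hsym (Equiv.ofBijective r hb) x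
    rw [hS1 r hrmem.2, this]
  rw [hone, Finset.sum_const]
  have hcard : (Finset.univ.filter
      (fun r : Fin n → Fin n => Function.Surjective r)).card = n.factorial := by
    rw [← Fintype.card_subtype]
    have e2 : {r : Fin n → Fin n // Function.Surjective r} ≃ Equiv.Perm (Fin n) :=
      { toFun := fun r => Equiv.ofBijective r.1 r.2.bijective_of_finite
        invFun := fun σ => ⟨σ, σ.surjective⟩
        left_inv := fun r => Subtype.ext rfl
        right_inv := fun σ => Equiv.ext fun i => rfl }
    rw [Fintype.card_congr e2, Fintype.card_perm, Fintype.card_fin]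
  rw [hcard]
  rw [← Nat.cast_smul_eq_nsmul K (2 ^ n * n.factorial) (u x),
    ← Nat.cast_smul_eq_nsmul K n.factorial ((2 ^ n : K) • u x), smul_smul]
  push_cast
  ring_nf
end
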